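/- Let (X_(1),...,X_(N_e)) be a SRSWOR of size N_e = πN from {x_1,...,x_N} with N ≥ 2, and define Var(Y | X_s) = π·X̄_e^(2) − (π·X̄_e)^2 as above. Then E(Var(Y | X_s)) = π·μ_x^(2) − (π·μ_x)^2 − π(1−π)·σ_x^2/(N−1), where μ_x^(2) = (1/N)Σx_i^2, μ_x = (1/N)Σx_i, and σ_x^2 = (1/N)Σ(x_i − μ_x)^2. -/

import Mathlib

/-! A fixed `k`-subset of the population lies in `C(N - k, n - k)` of the `C(N, n)` samples, so
double counting turns the sample average of a sum over the `k`-subsets of `s` into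
`C(n, k) / C(N, k)` times the population sum. With `k = 1` this averages `∑_{i ∈ s} x_i²`; with
`k = 2` it averages the cross terms of
`(∑_{i ∈ s} x_i)² = ∑_{i ∈ s} x_i² + 2 ∑_{{i, j} ⊆ s} x_i x_j`.
What remains is algebra, using `σ_x² = μ_x^(2) - μ_x²`. -/

open Finset

namespace Finset

variable {α : Type*} [DecidableEq α]

theorem choose_mul_card_filter_powersetCard_subset {U t : Finset α} {k : ℕ}
    (ht : t ∈ U.powersetCard k) (n : ℕ) :
    (#U).choose k * #{s ∈ U.powersetCard n | t ⊆ s} = n.choose k * (#U).choose n := by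
  rw [mem_powersetCard] at ht
  obtain ⟨htU, rfl⟩ := ht
  rcases le_or_gt #t n with htn | hnt
  · rw [card_filter_powersetCard_subset t U n htU htn, mul_comm (n.choose _),
      Nat.choose_mul htn]
  · have hempty : {s ∈ U.powersetCard n | t ⊆ s} = ∅ :=
      filter_eq_empty_iff.mpr fun s hs hts =>
        (card_le_card hts).not_gt ((mem_powersetCard.mp hs).2 ▸ hnt)
    rw [hempty, Nat.choose_eq_zero_of_lt hnt]; simp

theorem choose_smul_sum_powersetCard_sum_powersetCard {M : Type*} [AddCommMonoid M]
    (U : Finset α) (n k : ℕ) (g : Finset α → M) :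
    (#U).choose k • ∑ s ∈ U.powersetCard n, ∑ t ∈ s.powersetCard k, g t
      = (n.choose k * (#U).choose n) • ∑ t ∈ U.powersetCard k, g t := by
  have hswap : ∑ s ∈ U.powersetCard n, ∑ t ∈ s.powersetCard k, g t
      = ∑ t ∈ U.powersetCard k, #{s ∈ U.powersetCard n | t ⊆ s} • g t := by
    rw [sum_comm' (t' := U.powersetCard k) (s' := fun t => {s ∈ U.powersetCard n | t ⊆ s})]
    · simp only [sum_const]
    · intro s t
      simp only [mem_powersetCard, mem_filter]
      constructor
      · rintro ⟨⟨hsU, hs⟩, hts, ht⟩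
        exact ⟨⟨⟨hsU, hs⟩, hts⟩, hts.trans hsU, ht⟩
      · rintro ⟨⟨⟨hsU, hs⟩, hts⟩, -, ht⟩
        exact ⟨⟨hsU, hs⟩, hts, ht⟩
  rw [hswap, smul_sum, smul_sum]
  refine sum_congr rfl fun t ht => ?_
  rw [smul_smul, choose_mul_card_filter_powersetCard_subset ht]

theorem sq_sum_eq_sum_sq_add_two_mul_sum_powersetCard_two {R : Type*} [CommSemiring R]
    (s : Finset α) (f : α → R) :
    (∑ i ∈ s, f i) ^ 2
      = ∑ i ∈ s, f i ^ 2 + 2 * ∑ t ∈ s.powersetCard 2, ∏ i ∈ t, f i := by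
  induction s using Finset.induction_on with
  | empty => simp [powersetCard_eq_empty.2 (show #(∅ : Finset α) < 2 by simp)]
  | insert a s ha ih =>
    have hdisj : Disjoint (s.powersetCard 2) ((s.powersetCard 1).image (insert a)) := by
      simp only [disjoint_left, mem_powersetCard, mem_image, not_exists, not_and]
      rintro _ ⟨hts, -⟩ t - rfl
      exact ha (hts (mem_insert_self a t))
    rw [sum_insert ha, sum_insert ha, powersetCard_succ_insert ha, sum_union hdisj,
      powersetCard_one, map_eq_image, image_image, sum_image]
    · have hpair : ∀ i ∈ s, ∏ j ∈ {a, i}, f j = f a * f i := fun i hi =>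
        prod_pair (ne_of_mem_of_not_mem hi ha).symm
      simp only [Function.comp_apply, Function.Embedding.coeFn_mk, sum_congr rfl hpair,
        ← mul_sum]
      rw [add_sq, ih]
      ring
    · intro i hi j _ hij
      have hi' : i ∈ insert a ({j} : Finset α) := by
        rw [← show insert a {i} = insert a ({j} : Finset α) from hij]; simp
      rw [mem_insert, mem_singleton] at hi'
      exact hi'.resolve_left (ne_of_mem_of_not_mem hi ha)

theorem card_smul_sum_powersetCard_sum {M : Type*} [AddCommMonoid M]
    (U : Finset α) (n : ℕ) (f : α → M) :
    #U • ∑ s ∈ U.powersetCard n, ∑ i ∈ s, f i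
      = (n * #(U.powersetCard n)) • ∑ i ∈ U, f i := by
  have h := choose_smul_sum_powersetCard_sum_powersetCard U n 1 (fun t => ∑ i ∈ t, f i)
  simpa only [Nat.choose_one_right, powersetCard_one, sum_map, Function.Embedding.coeFn_mk,
    sum_singleton, card_powersetCard] using h

theorem one_div_card_mul_sum_sub_mean_sq {ι K : Type*} [Field K] (s : Finset ι)
    (f : ι → K) :
    1 / (#s : K) * ∑ i ∈ s, (f i - 1 / (#s : K) * ∑ j ∈ s, f j) ^ 2
      = 1 / (#s : K) * ∑ i ∈ s, f i ^ 2 - (1 / (#s : K) * ∑ i ∈ s, f i) ^ 2 := by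
  by_cases hcard : (#s : K) = 0
  · simp [hcard]
  simp only [sub_sq, sum_add_distrib, sum_sub_distrib, ← sum_mul, ← mul_sum, sum_const,
    nsmul_eq_mul]
  field_simp
  ring

end Finset

theorem stmt_2_general (N N_e : ℕ) (hN : 2 ≤ N) (hNe : 1 ≤ N_e) (hle : N_e ≤ N)
    (x : Fin N → ℝ)
    (π : ℝ) (hπ : π = (N_e : ℝ) / N)
    (μx μx2 σx2 : ℝ)
    (hμx : μx = (1 / (N : ℝ)) * ∑ i, x i)
    (hμx2 : μx2 = (1 / (N : ℝ)) * ∑ i, (x i) ^ 2)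
    (hσx2 : σx2 = (1 / (N : ℝ)) * ∑ i, (x i - μx) ^ 2) :
    (∑ s ∈ Finset.powersetCard N_e (Finset.univ : Finset (Fin N)),
        (π * ((1 / (N_e : ℝ)) * ∑ i ∈ s, (x i) ^ 2)
          - (π * ((1 / (N_e : ℝ)) * ∑ i ∈ s, x i)) ^ 2))
      / ((Finset.powersetCard N_e (Finset.univ : Finset (Fin N))).card : ℝ)
    = π * μx2 - (π * μx) ^ 2 - π * (1 - π) * σx2 / ((N : ℝ) - 1) := by
  have hσ : σx2 = μx2 - μx ^ 2 := by
    simpa only [card_univ, Fintype.card_fin, ← hμx, ← hμx2, ← hσx2]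
      using one_div_card_mul_sum_sub_mean_sq univ x
  have hsq_sum : ∑ s ∈ powersetCard N_e univ, (∑ i ∈ s, x i) ^ 2
      = ∑ s ∈ powersetCard N_e univ, ∑ i ∈ s, x i ^ 2
        + 2 * ∑ s ∈ powersetCard N_e univ, ∑ t ∈ s.powersetCard 2, ∏ i ∈ t, x i := by
    simp only [sq_sum_eq_sum_sq_add_two_mul_sum_powersetCard_two, sum_add_distrib, mul_sum]
  have hsq := sq_sum_eq_sum_sq_add_two_mul_sum_powersetCard_two univ x
  have hlin := card_smul_sum_powersetCard_sum univ N_e (fun i => x i ^ 2)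
  have hpair := choose_smul_sum_powersetCard_sum_powersetCard univ N_e 2 (fun t => ∏ i ∈ t, x i)
  simp only [card_univ, Fintype.card_fin, nsmul_eq_mul, Nat.cast_mul, Nat.cast_choose_two,
    card_powersetCard] at hlin hpair
  have hc : (N.choose N_e : ℝ) ≠ 0 := by exact_mod_cast (Nat.choose_pos hle).ne'
  have hN1 : (N : ℝ) - 1 ≠ 0 := by
    have : (2 : ℝ) ≤ N := by exact_mod_cast hN
    linarith
  have hn : (N_e : ℝ) ≠ 0 := by positivity
  simp only [mul_pow, sum_sub_distrib, ← mul_sum, hsq_sum]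
  rw [card_powersetCard, card_univ, Fintype.card_fin, hσ, hμx2, hμx, hπ]
  field_simp
  linear_combination (N : ℝ) * (N - 1) ^ 2 * hlin - 4 * N * hpair
    + N * N_e * N.choose N_e * (N_e - 1) * hsq

/-- Averaging the conditional variance
`Var(Y|X_s) = π·X̄_e^(2) − (π·X̄_e)²` over all SRSWOR samples `s` of size
`N_e = π·N` (i.e. all size-`N_e` subsets of the population, equally likely) gives
`E(Var(Y|X_s)) = π μ_x^(2) − (π μ_x)² − π(1−π) σ_x²/(N−1)`. -/
theorem stmt_2 (N N_e : ℕ) (hN : 2 ≤ N) (hNe : 1 ≤ N_e) (hle : N_e ≤ N)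
    (x : Fin N → ℝ) (hx : ∀ i, 0 < x i)
    (π : ℝ) (hπ : π = (N_e : ℝ) / N)
    (μx μx2 σx2 : ℝ)
    (hμx : μx = (1 / (N : ℝ)) * ∑ i, x i)
    (hμx2 : μx2 = (1 / (N : ℝ)) * ∑ i, (x i) ^ 2)
    (hσx2 : σx2 = (1 / (N : ℝ)) * ∑ i, (x i - μx) ^ 2) :
    (∑ s ∈ Finset.powersetCard N_e (Finset.univ : Finset (Fin N)),
        (π * ((1 / (N_e : ℝ)) * ∑ i ∈ s, (x i) ^ 2)
          - (π * ((1 / (N_e : ℝ)) * ∑ i ∈ s, x i)) ^ 2))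
      / ((Finset.powersetCard N_e (Finset.univ : Finset (Fin N))).card : ℝ)
    = π * μx2 - (π * μx) ^ 2 - π * (1 - π) * σx2 / ((N : ℝ) - 1) :=
  stmt_2_general N N_e hN hNe hle x π hπ μx μx2 σx2 hμx hμx2 hσx2
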